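/- Define an action of the symmetric group on ℚ(q₁,…,q_m) (each q_j an n-tuple of commuting variables, indices in ℤ/nℤ, n ≥ 2) where the simple transposition s_j acts by the geometric R-matrix R_j on (q_j, q_{j+1}). Then R_j R_{j+1} R_j = R_{j+1} R_j R_{j+1}, R_j² = id, and R_i R_j = R_j R_i for |i - j| > 1; hence the R_j generate an 𝔖_m-action by field automorphisms of ℚ(q₁,…,q_m). -/

import Mathlib

/-- `κ_i(p,q) = Σ_{s=0}^{n-1} (∏_{ℓ=1}^{s} p_{i-ℓ}) (∏_{ℓ=s+2}^{n} q_{i-ℓ})`. -/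
def kappa {K : Type*} [Field K] (n : ℕ) (p q : ZMod n → K) (i : ZMod n) : K :=
  ∑ j ∈ Finset.range n,
    (∏ l ∈ Finset.Icc 1 j, p (i - (l : ZMod n))) *
    (∏ l ∈ Finset.Icc (j + 2) n, q (i - (l : ZMod n)))

/-- The geometric R-matrix `R_j` acting (by substitution) on a family of variables
`q : Fin m → ZMod n → K`: it sends `q_{j,i} ↦ q_{j+1,i} κ_{i+1}/κ_i` and
`q_{j+1,i} ↦ q_{j,i} κ_i/κ_{i+1}` (with `κ_i = κ_i(q_j, q_{j+1})`), fixing all other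
variables.  Here rows are indexed `0,…,m-1`. -/
noncomputable def Rgeom {K : Type*} [Field K] (n m : ℕ) (j : ℕ)
    (q : Fin m → ZMod n → K) : Fin m → ZMod n → K := fun h i =>
  if hj : j + 1 < m then
    let p : ZMod n → K := q ⟨j, Nat.lt_of_succ_lt hj⟩
    let qq : ZMod n → K := q ⟨j + 1, hj⟩
    if (h : ℕ) = j then qq i * kappa n p qq (i + 1) / kappa n p qq i
    else if (h : ℕ) = j + 1 then p i * kappa n p qq i / kappa n p qq (i + 1)
    else q h i
  else q h i

/-- The generic point: `q_{j,i}` are independent indeterminates in the rational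
function field `ℚ(q₁,…,q_m)`. -/
noncomputable def genQ (n m : ℕ) :
    Fin m → ZMod n → FractionRing (MvPolynomial (Fin m × ZMod n) ℚ) :=
  fun j i => algebraMap (MvPolynomial (Fin m × ZMod n) ℚ) _ (MvPolynomial.X (j, i))

open Finset

section Generic

set_option linter.unusedSectionVars false

variable {K : Type*} [Field K] {n : ℕ} [NeZero n]

private lemma prodShift (f : ZMod n → K) (i : ZMod n) :
    ∏ k ∈ range n, f (i + (k : ZMod n)) = ∏ x : ZMod n, f x := by
  refine Finset.prod_nbij' (fun k => i + (k : ZMod n)) (fun x => (x - i).val) ?_ ?_ ?_ ?_ ?_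
  · intro k _; exact mem_univ _
  · intro x _; simpa using ZMod.val_lt (x - i)
  · intro k hk
    simp only [mem_range] at hk
    show (i + (k : ZMod n) - i).val = k
    rw [add_sub_cancel_left, ZMod.val_natCast_of_lt hk]
  · intro x _
    show i + ((x - i).val : ZMod n) = x
    rw [ZMod.natCast_val, ZMod.cast_id]; ring
  · intro k _; rfl

private lemma prodShiftNeg (f : ZMod n → K) (i : ZMod n) :
    ∏ k ∈ range n, f (i - (k : ZMod n)) = ∏ x : ZMod n, f x := by
  refine Finset.prod_nbij' (fun k => i - (k : ZMod n)) (fun x => (i - x).val) ?_ ?_ ?_ ?_ ?_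
  · intro k _; exact mem_univ _
  · intro x _; simpa using ZMod.val_lt (i - x)
  · intro k hk
    simp only [mem_range] at hk
    show (i - (i - (k : ZMod n))).val = k
    rw [sub_sub_cancel, ZMod.val_natCast_of_lt hk]
  · intro x _
    show i - (((i - x).val : ℕ) : ZMod n) = x
    rw [ZMod.natCast_val, ZMod.cast_id]; ring
  · intro k _; rfl

private lemma prodValCast (f : ZMod n → K) :
    ∏ k ∈ range n, f ((k : ℕ) : ZMod n) = ∏ x : ZMod n, f x := by
  have := prodShift f 0
  simpa using this

/-- cyclic chain lemma: a homogeneous cyclic linear recurrence with distinct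
total products has only the zero solution. -/
private lemma chain (α β x : ZMod n → K)
    (h : ∀ i, α i * x i = β i * x (i + 1))
    (hne : ∏ t : ZMod n, α t ≠ ∏ t : ZMod n, β t) : ∀ i, x i = 0 := by
  intro i
  have key : ∀ j : ℕ, x i * ∏ k ∈ range j, α (i + k)
      = x (i + (j : ZMod n)) * ∏ k ∈ range j, β (i + k) := by
    intro j
    induction j with
    | zero => simp
    | succ j ih =>
      rw [prod_range_succ, prod_range_succ, ← mul_assoc, ih]
      have := h (i + (j : ZMod n))
      push_cast
      calc x (i + (j:ZMod n)) * (∏ k ∈ range j, β (i + (k:ZMod n))) * α (i + (j:ZMod n))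
          = (α (i + (j:ZMod n)) * x (i + (j:ZMod n))) * ∏ k ∈ range j, β (i + (k:ZMod n)) := by
            ring
        _ = (β (i + (j:ZMod n)) * x (i + (j:ZMod n) + 1)) * ∏ k ∈ range j, β (i + (k:ZMod n)) := by
            rw [this]
        _ = x (i + ((j:ZMod n) + 1)) * ((∏ k ∈ range j, β (i + (k:ZMod n))) * β (i + (j:ZMod n))) := by
            rw [← add_assoc]; ring
  have kn := key n
  rw [ZMod.natCast_self, add_zero, prodShift α, prodShift β] at kn
  by_contra hx
  exact hne (mul_left_cancel₀ hx kn)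

private lemma cornerChain (lam : K) (q z : ZMod n → K)
    (h : ∀ i, q i * z i + (if i = 0 then lam else 1) * z (i - 1) = 0)
    (hne : lam ≠ (-1) ^ n * ∏ t : ZMod n, q t) : ∀ i, z i = 0 := by
  have hα : ∏ t : ZMod n, (if t + 1 = 0 then lam else (1:K)) = lam := by
    rw [Fintype.prod_eq_single (-1 : ZMod n) ?_]
    · simp
    · intro t ht
      rw [if_neg]
      intro hc
      exact ht (eq_neg_of_add_eq_zero_left hc)
  have hβ : ∏ t : ZMod n, (-q (t + 1)) = (-1) ^ n * ∏ t : ZMod n, q t := by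
    have h1 : ∏ t : ZMod n, (-q (t + 1)) = ∏ t : ZMod n, ((-1) * q (t + 1)) := by
      apply Finset.prod_congr rfl; intros; ring
    rw [h1, Finset.prod_mul_distrib]
    congr 1
    · simp [ZMod.card]
    · exact Fintype.prod_equiv (Equiv.addRight 1) _ _ (fun t => rfl)
  refine chain (fun i => if i + 1 = 0 then lam else 1) (fun i => -q (i + 1)) z ?_ ?_
  · intro i
    have := h (i + 1)
    rw [add_sub_cancel_right] at this
    show (if i + 1 = 0 then lam else 1) * z i = -q (i + 1) * z (i + 1)
    by_cases hc : i + 1 = 0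
    · rw [if_pos hc] at this ⊢; linear_combination this
    · rw [if_neg hc] at this ⊢; linear_combination this
  · rw [hα, hβ]; exact hne

private lemma prod_Icc_shift (g : ℕ → K) (a b : ℕ) :
    ∏ l ∈ Icc (a+1) (b+1), g l = ∏ l ∈ Icc a b, g (l + 1) := by
  rw [← Finset.Ico_add_one_right_eq_Icc, ← Finset.Ico_add_one_right_eq_Icc, Finset.prod_Ico_eq_prod_range,
    Finset.prod_Ico_eq_prod_range]
  have : b + 1 + 1 - (a + 1) = b + 1 - a := by omega
  rw [this]
  exact Finset.prod_congr rfl (fun k _ => by congr 1; omega)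

private lemma prod_Icc_one_eq_range (h : ZMod n → K) (i : ZMod n) (k : ℕ) :
    ∏ l ∈ Icc 1 k, h (i - (l : ZMod n)) = ∏ j ∈ range k, h (i - ((j+1 : ℕ) : ZMod n)) := by
  rcases Nat.eq_zero_or_pos k with hk | hk
  · subst hk; simp
  · have : Icc 1 k = Icc (0+1) ((k-1)+1) := by congr 1 <;> omega
    rw [this, prod_Icc_shift, ← Finset.Ico_add_one_right_eq_Icc, Finset.prod_Ico_eq_prod_range]
    exact Finset.prod_congr (by congr 1; omega) (fun j _ => by norm_num)

private lemma prod_window (h : ZMod n → K) (i : ZMod n) :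
    h i * ∏ l ∈ Icc 1 (n-1), h (i - (l : ZMod n)) = ∏ x : ZMod n, h x := by
  have hn1 : 1 ≤ n := Nat.one_le_iff_ne_zero.mpr (NeZero.ne n)
  rw [← prodShiftNeg h i, prod_Icc_one_eq_range,
    show range n = range ((n-1)+1) by congr 1; omega, Finset.prod_range_succ']
  simp [mul_comm]

/-- The fundamental recurrence for `κ`:
`p_i κ_i - q_i κ_{i+1} = ∏ p - ∏ q`. -/
private lemma kappa_rec (p q : ZMod n → K) (i : ZMod n) :
    p i * kappa n p q i - q i * kappa n p q (i + 1)
      = (∏ x : ZMod n, p x) - ∏ x : ZMod n, q x := by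
  have hn1 : 1 ≤ n := Nat.one_le_iff_ne_zero.mpr (NeZero.ne n)
  have hA : p i * kappa n p q i =
      (∑ j ∈ range (n-1), p i *
        ((∏ l ∈ Icc 1 j, p (i - (l:ZMod n))) * ∏ l ∈ Icc (j+2) n, q (i - (l:ZMod n))))
      + ∏ x : ZMod n, p x := by
    rw [kappa, Finset.mul_sum, show range n = range ((n-1)+1) by congr 1; omega,
      Finset.sum_range_succ]
    congr 1
    rw [Finset.Icc_eq_empty (show ¬ (n-1+2 ≤ n) by omega), Finset.prod_empty, mul_one]
    exact prod_window p i
  have hB : q i * kappa n p q (i + 1) =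
      (∑ j ∈ range (n-1), q i *
        ((∏ l ∈ Icc 1 (j+1), p (i + 1 - (l:ZMod n))) * ∏ l ∈ Icc (j+1+2) n, q (i + 1 - (l:ZMod n))))
      + ∏ x : ZMod n, q x := by
    rw [kappa, Finset.mul_sum, show range n = range ((n-1)+1) by congr 1; omega,
      Finset.sum_range_succ']
    congr 1
    rw [show Icc 1 0 = (∅ : Finset ℕ) from Finset.Icc_eq_empty (by omega), Finset.prod_empty,
      one_mul, show (0+2) = 1+1 from rfl]
    have hsh := prod_Icc_shift (fun l : ℕ => q (i + 1 - (l:ZMod n))) 1 (n-1)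
    rw [show (n-1)+1 = n by omega] at hsh
    rw [hsh]
    have h2 : ∀ l : ℕ, q (i + 1 - ((l+1:ℕ):ZMod n)) = q (i - (l:ZMod n)) := by
      intro l; congr 1; push_cast; ring
    calc q i * ∏ l ∈ Icc 1 (n-1), q (i + 1 - ((l+1:ℕ):ZMod n))
        = q i * ∏ l ∈ Icc 1 (n-1), q (i - (l:ZMod n)) :=
          by rw [Finset.prod_congr rfl (fun l _ => h2 l)]
      _ = ∏ x : ZMod n, q x := prod_window q i
  have hmatch : ∀ j ∈ range (n-1),
      p i * ((∏ l ∈ Icc 1 j, p (i - (l:ZMod n))) * ∏ l ∈ Icc (j+2) n, q (i - (l:ZMod n)))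
      = q i * ((∏ l ∈ Icc 1 (j+1), p (i + 1 - (l:ZMod n))) *
          ∏ l ∈ Icc (j+1+2) n, q (i + 1 - (l:ZMod n))) := by
    intro j hj
    rw [mem_range] at hj
    have c1 : ∏ l ∈ Icc 1 (j+1), p (i + 1 - (l:ZMod n))
        = p i * ∏ l ∈ Icc 1 j, p (i - (l:ZMod n)) := by
      rw [← Finset.Ico_add_one_right_eq_Icc, Finset.prod_eq_prod_Ico_succ_bot (by omega),
        Finset.Ico_add_one_right_eq_Icc]
      have e1 : p (i + 1 - ((1:ℕ):ZMod n)) = p i := by norm_num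
      have e2 : ∏ l ∈ Icc 2 (j+1), p (i+1-(l:ZMod n)) = ∏ l ∈ Icc 1 j, p (i - (l:ZMod n)) := by
        rw [show Icc 2 (j+1) = Icc (1+1) (j+1) from rfl, prod_Icc_shift]
        exact Finset.prod_congr rfl (fun l _ => by congr 1; push_cast; ring)
      rw [e1, e2]
    have c2 : ∏ l ∈ Icc (j+1+2) n, q (i + 1 - (l:ZMod n))
        = ∏ l ∈ Icc (j+2) (n-1), q (i - (l:ZMod n)) := by
      rw [show Icc (j+1+2) n = Icc ((j+2)+1) ((n-1)+1) by congr 1; omega, prod_Icc_shift]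
      refine Finset.prod_congr rfl (fun l _ => by congr 1; push_cast; ring)
    have c3 : ∏ l ∈ Icc (j+2) n, q (i - (l:ZMod n))
        = (∏ l ∈ Icc (j+2) (n-1), q (i - (l:ZMod n))) * q i := by
      have h := Finset.prod_Icc_succ_top (a := j+2) (b := n-1)
        (f := fun l : ℕ => q (i - (l:ZMod n))) (by omega)
      rw [show (n-1)+1 = n by omega] at h
      rw [h, ZMod.natCast_self, sub_zero]
    rw [c1, c2, c3]
    ring
  rw [hA, hB, Finset.sum_congr rfl hmatch]
  ring

end Generic

/-- the transformed pair under the geometric R-matrix -/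
noncomputable def Rp (n : ℕ) {K : Type*} [Field K] (p q : ZMod n → K) :
    (ZMod n → K) × (ZMod n → K) :=
  (fun i => q i * kappa n p q (i+1) / kappa n p q i,
   fun i => p i * kappa n p q i / kappa n p q (i+1))

section Pair

set_option linter.unusedSectionVars false

variable {K : Type*} [Field K] {n : ℕ} [NeZero n]
variable (p q : ZMod n → K) (hk : ∀ i, kappa n p q i ≠ 0)

include hk

private lemma Rp_mul (i : ZMod n) : (Rp n p q).1 i * (Rp n p q).2 i = p i * q i := by
  simp only [Rp]
  field_simp [hk i, hk (i+1)]

private lemma Rp_add (i : ZMod n) :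
    (Rp n p q).1 i + (Rp n p q).2 (i-1) = p i + q (i-1) := by
  simp only [Rp]
  have h1 := kappa_rec p q i
  have h2 := kappa_rec p q (i-1)
  rw [sub_add_cancel] at h2
  have L4 : q i * kappa n p q (i+1) + p (i-1) * kappa n p q (i-1)
      = (p i + q (i-1)) * kappa n p q i := by linear_combination h2 - h1
  rw [show i - 1 + 1 = i by ring, ← add_div, L4, mul_div_assoc, div_self (hk i), mul_one]

private lemma Rp_prod_fst : ∏ x : ZMod n, (Rp n p q).1 x = ∏ x : ZMod n, q x := by
  simp only [Rp]
  rw [Finset.prod_div_distrib, Finset.prod_mul_distrib]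
  rw [show ∏ x : ZMod n, kappa n p q (x+1) = ∏ x : ZMod n, kappa n p q x from
    Fintype.prod_equiv (Equiv.addRight 1) _ _ (fun t => rfl)]
  rw [mul_div_assoc, div_self (Finset.prod_ne_zero_iff.mpr (fun x _ => hk x)), mul_one]

private lemma Rp_prod_snd : ∏ x : ZMod n, (Rp n p q).2 x = ∏ x : ZMod n, p x := by
  simp only [Rp]
  rw [Finset.prod_div_distrib, Finset.prod_mul_distrib]
  rw [show ∏ x : ZMod n, kappa n p q (x+1) = ∏ x : ZMod n, kappa n p q x from
    Fintype.prod_equiv (Equiv.addRight 1) _ _ (fun t => rfl)]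
  rw [mul_div_assoc, div_self (Finset.prod_ne_zero_iff.mpr (fun x _ => hk x)), mul_one]

private lemma kappa_Rp (hpq : ∏ x : ZMod n, p x ≠ ∏ x : ZMod n, q x) (i : ZMod n) :
    kappa n (Rp n p q).1 (Rp n p q).2 i = kappa n p q i := by
  set pt := (Rp n p q).1 with hpt
  set qt := (Rp n p q).2 with hqt
  have hrec : ∀ i : ZMod n, pt i * kappa n pt qt i - qt i * kappa n pt qt (i+1)
      = (∏ x : ZMod n, q x) - ∏ x : ZMod n, p x := by
    intro i
    rw [kappa_rec pt qt i, ← Rp_prod_fst p q hk, ← Rp_prod_snd p q hk]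
  have hrec2 : ∀ i : ZMod n, pt i * kappa n p q i - qt i * kappa n p q (i+1)
      = (∏ x : ZMod n, q x) - ∏ x : ZMod n, p x := by
    intro i
    have h1 := kappa_rec p q i
    simp only [hpt, hqt, Rp]
    rw [div_mul_cancel₀ _ (hk i), div_mul_cancel₀ _ (hk (i+1))]
    linear_combination -h1
  have hchain : ∀ j : ZMod n, pt j * (kappa n pt qt j - kappa n p q j)
      = qt j * (kappa n pt qt (j+1) - kappa n p q (j+1)) := by
    intro j
    linear_combination hrec j - hrec2 j
  have h0 := chain pt qt (fun j => kappa n pt qt j - kappa n p q j) hchain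
    (by rw [Rp_prod_fst p q hk, Rp_prod_snd p q hk]; exact fun hc => hpq (hc.symm))
  exact sub_eq_zero.mp (h0 i)

private lemma Rp_invol (hpq : ∏ x : ZMod n, p x ≠ ∏ x : ZMod n, q x) :
    Rp n (Rp n p q).1 (Rp n p q).2 = (p, q) := by
  have h1 : (Rp n (Rp n p q).1 (Rp n p q).2).1 = p := by
    funext i
    show (Rp n p q).2 i * kappa n (Rp n p q).1 (Rp n p q).2 (i+1)
        / kappa n (Rp n p q).1 (Rp n p q).2 i = p i
    rw [kappa_Rp p q hk hpq, kappa_Rp p q hk hpq]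
    show p i * kappa n p q i / kappa n p q (i+1) * kappa n p q (i+1) / kappa n p q i = p i
    rw [div_mul_cancel₀ _ (hk (i+1)), mul_div_assoc, div_self (hk i), mul_one]
  have h2 : (Rp n (Rp n p q).1 (Rp n p q).2).2 = q := by
    funext i
    show (Rp n p q).1 i * kappa n (Rp n p q).1 (Rp n p q).2 i
        / kappa n (Rp n p q).1 (Rp n p q).2 (i+1) = q i
    rw [kappa_Rp p q hk hpq, kappa_Rp p q hk hpq]
    show q i * kappa n p q (i+1) / kappa n p q i * kappa n p q i / kappa n p q (i+1) = q i
    rw [div_mul_cancel₀ _ (hk i), mul_div_assoc, div_self (hk (i+1)), mul_one]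
  exact Prod.ext h1 h2

end Pair

section Unique

set_option linter.unusedSectionVars false

variable {K : Type*} [Field K] {n : ℕ} [NeZero n]

/-- kernel vector for the corner matrix of `c` -/
private noncomputable def kerV (n : ℕ) [NeZero n] {K : Type*} [Field K] (c : ZMod n → K) :
    ZMod n → K :=
  fun i => (-1)^(i.val) * ∏ l ∈ Ico (i.val + 1) n, c ((l:ℕ) : ZMod n)

private lemma kerV_ne_zero (c : ZMod n → K) (hc : ∀ i, c i ≠ 0) (i : ZMod n) :
    kerV n c i ≠ 0 := by
  apply mul_ne_zero
  · exact pow_ne_zero _ (neg_ne_zero.mpr one_ne_zero)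
  · exact Finset.prod_ne_zero_iff.mpr (fun l _ => hc _)

private lemma neg_one_val : (-1 : ZMod n).val = n - 1 := by
  have hn1 : 1 ≤ n := Nat.one_le_iff_ne_zero.mpr (NeZero.ne n)
  have e : (-1 : ZMod n) = ((n-1 : ℕ) : ZMod n) := by
    have h2 : ((n-1:ℕ):ZMod n) + ((1:ℕ):ZMod n) = ((n:ℕ) : ZMod n) := by
      rw [← Nat.cast_add]; congr 1; omega
    rw [ZMod.natCast_self, Nat.cast_one] at h2
    exact (eq_neg_of_add_eq_zero_left h2).symm
  rw [e, ZMod.val_cast_of_lt (by omega)]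

private lemma kerV_rel (c : ZMod n → K) (i : ZMod n) :
    c i * kerV n c i
      + (if i = 0 then (-1)^n * ∏ x : ZMod n, c x else 1) * kerV n c (i - 1) = 0 := by
  have hn1 : 1 ≤ n := Nat.one_le_iff_ne_zero.mpr (NeZero.ne n)
  by_cases h0 : i = 0
  · subst h0
    rw [if_pos rfl]
    have hv0 : kerV n c 0 = ∏ l ∈ Ico 1 n, c ((l:ℕ) : ZMod n) := by
      simp [kerV, ZMod.val_zero]
    have hvm : kerV n c (0 - 1) = (-1)^(n-1) := by
      rw [zero_sub, kerV, neg_one_val, show n-1+1 = n by omega, Finset.Ico_self,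
        Finset.prod_empty, mul_one]
    rw [hv0, hvm]
    have : c 0 * ∏ l ∈ Ico 1 n, c ((l:ℕ) : ZMod n) = ∏ x : ZMod n, c x := by
      rw [← prodValCast c, Finset.range_eq_Ico, Finset.prod_eq_prod_Ico_succ_bot hn1]
      norm_num
    rw [this]
    have hsgn : (-1:K)^n * (-1)^(n-1) = -1 := by
      rw [← pow_add, show n + (n-1) = 2*(n-1)+1 by omega, pow_succ, pow_mul]
      norm_num
    linear_combination (∏ x : ZMod n, c x) * hsgn
  · rw [if_neg h0]
    have ht : 1 ≤ i.val := by
      rcases Nat.eq_zero_or_pos i.val with h | h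
      · exact absurd ((ZMod.val_eq_zero i).mp h) h0
      · exact h
    have hlt : i.val < n := ZMod.val_lt i
    have him : ((i.val - 1 : ℕ) : ZMod n) = i - 1 := by
      rw [Nat.cast_sub ht, ZMod.natCast_val, ZMod.cast_id, Nat.cast_one]
    have hval : (i - 1).val = i.val - 1 := by
      rw [← him, ZMod.val_cast_of_lt (by omega)]
    rw [kerV, kerV, hval, show i.val - 1 + 1 = i.val by omega]
    have hsplit : ∏ l ∈ Ico i.val n, c ((l:ℕ) : ZMod n)
        = c ((i.val : ℕ) : ZMod n) * ∏ l ∈ Ico (i.val + 1) n, c ((l:ℕ) : ZMod n) :=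
      Finset.prod_eq_prod_Ico_succ_bot (by omega) _
    rw [hsplit, ZMod.natCast_val, ZMod.cast_id]
    have hsgn : (-1:K)^(i.val) = -(-1:K)^(i.val - 1) := by
      rw [show i.val = (i.val - 1) + 1 by omega, pow_succ,
        show i.val - 1 + 1 - 1 = i.val - 1 by omega]
      ring
    rw [hsgn]
    ring

/-- uniqueness of triples with given invariants -/
private lemma triple_unique (a b c a' b' c' : ZMod n → K)
    (hT : ∀ i, a i * b i * c i = a' i * b' i * c' i)
    (hU : ∀ i, a i * b i + a i * c (i-1) + b (i-1) * c (i-1)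
             = a' i * b' i + a' i * c' (i-1) + b' (i-1) * c' (i-1))
    (hV : ∀ i, a i + b (i-1) + c (i-2) = a' i + b' (i-1) + c' (i-2))
    (hpa : ∏ x : ZMod n, a x = ∏ x : ZMod n, a' x)
    (hpb : ∏ x : ZMod n, b x = ∏ x : ZMod n, b' x)
    (hac : ∏ x : ZMod n, a x ≠ ∏ x : ZMod n, c x)
    (hbc : ∏ x : ZMod n, b x ≠ ∏ x : ZMod n, c x)
    (hab : ∏ x : ZMod n, a x ≠ ∏ x : ZMod n, b x)
    (hc0 : ∀ i, c i ≠ 0) :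
    a = a' ∧ b = b' ∧ c = c' := by
  set lam : K := (-1)^n * ∏ x : ZMod n, c x with hlam
  set e : ZMod n → K := fun i => if i = 0 then lam else 1 with he
  set v : ZMod n → K := kerV n c with hv
  have hE : ∀ i : ZMod n, c i * v i + e i * v (i-1) = 0 := fun i => kerV_rel c i
  have main : ∀ i : ZMod n,
      (a' i * b' i * c' i) * v i
      + e i * (a' i * b' i + a' i * c' (i-1) + b' (i-1) * c' (i-1)) * v (i-1)
      + e i * e (i-1) * (a' i + b' (i-1) + c' (i-2)) * v (i-2)
      + e i * e (i-1) * e (i-2) * v (i-3) = 0 := by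
    intro i
    have h1 := hE i
    have h2 := hE (i-1)
    rw [show i-1-1 = i-2 by ring] at h2
    have h3 := hE (i-2)
    rw [show i-2-1 = i-3 by ring] at h3
    rw [← hT i, ← hU i, ← hV i]
    linear_combination (a i * b i) * h1 + (a i * e i + e i * b (i-1)) * h2
      + (e i * e (i-1)) * h3
  set g' : ZMod n → K := fun i => c' i * v i + e i * v (i-1) with hg'
  set h' : ZMod n → K := fun i => b' i * g' i + e i * g' (i-1) with hh'
  have hstep : ∀ i : ZMod n, a' i * h' i + e i * h' (i-1) = 0 := by
    intro i
    have hm := main i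
    simp only [hh', hg']
    rw [show i-1-1 = i-2 by ring, show i-2-1 = i-3 by ring]
    linear_combination hm
  have hprodne : lam ≠ (-1)^n * ∏ t : ZMod n, a' t := by
    rw [hlam, ← hpa]
    intro hcon
    exact hac (mul_left_cancel₀ (pow_ne_zero n (neg_ne_zero.mpr (one_ne_zero))) hcon).symm
  have hh0 : ∀ i, h' i = 0 := by
    refine cornerChain lam a' h' ?_ hprodne
    intro i
    have := hstep i
    simpa [he] using this
  have hprodne2 : lam ≠ (-1)^n * ∏ t : ZMod n, b' t := by
    rw [hlam, ← hpb]
    intro hcon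
    exact hbc (mul_left_cancel₀ (pow_ne_zero n (neg_ne_zero.mpr (one_ne_zero))) hcon).symm
  have hg0 : ∀ i, g' i = 0 := by
    refine cornerChain lam b' g' ?_ hprodne2
    intro i
    have h1 : b' i * g' i + e i * g' (i - 1) = 0 := by rw [← hh0 i, hh']
    simpa [he] using h1
  have hcc : ∀ i, c' i = c i := by
    intro i
    have h1 : c' i * v i + e i * v (i-1) = 0 := by rw [← hg0 i, hg']
    have h2 := hE i
    have h3 : (c' i - c i) * v i = 0 := by linear_combination h1 - h2
    rcases mul_eq_zero.mp h3 with h | h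
    · exact sub_eq_zero.mp h
    · exact absurd h (kerV_ne_zero c hc0 i)
  have hVab : ∀ i : ZMod n, a i + b (i-1) = a' i + b' (i-1) := by
    intro i
    linear_combination hV i + hcc (i-2)
  have hTab : ∀ i : ZMod n, a i * b i = a' i * b' i := by
    intro i
    have h4 : (a i * b i) * c i = (a' i * b' i) * c i := by
      linear_combination hT i + (a' i * b' i) * hcc i
    exact mul_right_cancel₀ (hc0 i) h4
  have hu : ∀ i : ZMod n, b' i * (a' i - a i) = a i * (a' (i+1) - a (i+1)) := by
    intro i
    have h5 := hVab (i+1)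
    rw [show i+1-1 = i by ring] at h5
    linear_combination b' i * (0:K) - hTab i + a i * (0:K) + (a i) * h5
  have hu0 := chain b' a (fun i => a' i - a i) hu
    (by rw [← hpb]; exact fun hcon => hab hcon.symm)
  have haa : ∀ i, a i = a' i := fun i => by linear_combination -(hu0 i)
  have hbb : ∀ i, b i = b' i := by
    intro i
    have h6 := hVab (i+1)
    rw [show i+1-1 = i by ring] at h6
    linear_combination h6 - haa (i+1)
  exact ⟨funext haa, funext hbb, funext (fun i => (hcc i).symm)⟩

end Unique

section Access

set_option linter.unusedSectionVars false

variable {K : Type*} [Field K] {n m : ℕ}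

private lemma Rgeom_left (j : ℕ) (hj : j + 1 < m) (q : Fin m → ZMod n → K) (h : Fin m)
    (hh : (h:ℕ) = j) :
    Rgeom n m j q h = (Rp n (q ⟨j, Nat.lt_of_succ_lt hj⟩) (q ⟨j+1, hj⟩)).1 := by
  funext i
  simp only [Rgeom, dif_pos hj, hh, if_pos rfl, Rp, if_true]

private lemma Rgeom_right (j : ℕ) (hj : j + 1 < m) (q : Fin m → ZMod n → K) (h : Fin m)
    (hh : (h:ℕ) = j + 1) :
    Rgeom n m j q h = (Rp n (q ⟨j, Nat.lt_of_succ_lt hj⟩) (q ⟨j+1, hj⟩)).2 := by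
  funext i
  have hne : (h:ℕ) ≠ j := by omega
  simp only [Rgeom, dif_pos hj, hh, Rp]
  rw [if_neg (by omega : ¬ (j+1 = j))]
  simp

private lemma Rgeom_other (j : ℕ) (q : Fin m → ZMod n → K) (h : Fin m)
    (h1 : (h:ℕ) ≠ j) (h2 : (h:ℕ) ≠ j + 1) :
    Rgeom n m j q h = q h := by
  funext i
  simp only [Rgeom]
  split
  · simp only [if_neg h1, if_neg h2]
  · rfl

/-- invariance of the triple invariants when `R` acts on the left pair -/
private lemma TUV_left [NeZero n] (a b c : ZMod n → K) (hk : ∀ i, kappa n a b i ≠ 0) :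
    (∀ i, (Rp n a b).1 i * (Rp n a b).2 i * c i = a i * b i * c i) ∧
    (∀ i, (Rp n a b).1 i * (Rp n a b).2 i + (Rp n a b).1 i * c (i-1)
          + (Rp n a b).2 (i-1) * c (i-1)
        = a i * b i + a i * c (i-1) + b (i-1) * c (i-1)) ∧
    (∀ i, (Rp n a b).1 i + (Rp n a b).2 (i-1) + c (i-2) = a i + b (i-1) + c (i-2)) := by
  refine ⟨fun i => ?_, fun i => ?_, fun i => ?_⟩
  · linear_combination c i * Rp_mul a b hk i
  · linear_combination Rp_mul a b hk i + c (i-1) * Rp_add a b hk i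
  · linear_combination Rp_add a b hk i

/-- invariance of the triple invariants when `R` acts on the right pair -/
private lemma TUV_right [NeZero n] (a b c : ZMod n → K) (hk : ∀ i, kappa n b c i ≠ 0) :
    (∀ i, a i * (Rp n b c).1 i * (Rp n b c).2 i = a i * b i * c i) ∧
    (∀ i, a i * (Rp n b c).1 i + a i * (Rp n b c).2 (i-1)
          + (Rp n b c).1 (i-1) * (Rp n b c).2 (i-1)
        = a i * b i + a i * c (i-1) + b (i-1) * c (i-1)) ∧
    (∀ i, a i + (Rp n b c).1 (i-1) + (Rp n b c).2 (i-2) = a i + b (i-1) + c (i-2)) := by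
  refine ⟨fun i => ?_, fun i => ?_, fun i => ?_⟩
  · linear_combination a i * Rp_mul b c hk i
  · linear_combination a i * Rp_add b c hk i + Rp_mul b c hk (i-1)
  · have h := Rp_add b c hk (i-1)
    rw [show i-1-1 = i-2 by ring] at h
    linear_combination h

end Access

section Positivity

abbrev RngP (m n : ℕ) := MvPolynomial (Fin m × ZMod n) ℚ
abbrev KKP (m n : ℕ) := FractionRing (RngP m n)

variable {m n : ℕ}

/-- subtraction-free (hence nonzero) elements of the rational function field -/
private def IsPos (x : KKP m n) : Prop :=
  ∃ f g : RngP m n, f ≠ 0 ∧ g ≠ 0 ∧ (∀ d, 0 ≤ f.coeff d) ∧ (∀ d, 0 ≤ g.coeff d) ∧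
    x * algebraMap (RngP m n) (KKP m n) g = algebraMap (RngP m n) (KKP m n) f

namespace IsPos

private lemma coeff_mul_nonneg {f g : RngP m n} (hf : ∀ d, 0 ≤ f.coeff d)
    (hg : ∀ d, 0 ≤ g.coeff d) : ∀ d, 0 ≤ (f * g).coeff d := by
  intro d
  rw [MvPolynomial.coeff_mul]
  exact Finset.sum_nonneg (fun p _ => mul_nonneg (hf _) (hg _))

private lemma ne_zero {x : KKP m n} (h : IsPos x) : x ≠ 0 := by
  obtain ⟨f, g, hf, hg, _, _, hx⟩ := h
  intro h0
  rw [h0, zero_mul] at hx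
  exact hf (IsFractionRing.injective (RngP m n) (KKP m n) (by rw [← hx, map_zero]))

private lemma one : IsPos (1 : KKP m n) := by
  refine ⟨1, 1, one_ne_zero, one_ne_zero, ?_, ?_, by rw [one_mul]⟩ <;>
  · intro d; rw [MvPolynomial.coeff_one]; split <;> norm_num

private lemma X (v : Fin m × ZMod n) :
    IsPos (algebraMap (RngP m n) (KKP m n) (MvPolynomial.X v)) := by
  refine ⟨MvPolynomial.X v, 1, MvPolynomial.X_ne_zero v, one_ne_zero, ?_, ?_,
    by rw [map_one, mul_one]⟩
  · intro d; rw [MvPolynomial.coeff_X']; split <;> norm_num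
  · intro d; rw [MvPolynomial.coeff_one]; split <;> norm_num

private lemma mul {x y : KKP m n} (hx : IsPos x) (hy : IsPos y) : IsPos (x * y) := by
  obtain ⟨f, g, hf, hg, hfc, hgc, hfg⟩ := hx
  obtain ⟨f', g', hf', hg', hfc', hgc', hfg'⟩ := hy
  refine ⟨f * f', g * g', mul_ne_zero hf hf', mul_ne_zero hg hg',
    coeff_mul_nonneg hfc hfc', coeff_mul_nonneg hgc hgc', ?_⟩
  rw [map_mul, map_mul]
  calc x * y * (algebraMap (RngP m n) (KKP m n) g * algebraMap (RngP m n) (KKP m n) g')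
      = (x * algebraMap (RngP m n) (KKP m n) g) * (y * algebraMap (RngP m n) (KKP m n) g') := by
        ring
    _ = _ := by rw [hfg, hfg']

private lemma nonneg_poly_ne_zero_add {f g : RngP m n} (hf0 : f ≠ 0)
    (hfc : ∀ d, 0 ≤ f.coeff d) (hgc : ∀ d, 0 ≤ g.coeff d) : f + g ≠ 0 := by
  intro h0
  obtain ⟨d, hd⟩ := MvPolynomial.ne_zero_iff.mp hf0
  have h1 : (f + g).coeff d = 0 := by rw [h0, MvPolynomial.coeff_zero]
  rw [MvPolynomial.coeff_add] at h1
  have := hfc d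
  have := hgc d
  have : f.coeff d = 0 := by linarith
  exact hd this

private lemma add {x y : KKP m n} (hx : IsPos x) (hy : IsPos y) : IsPos (x + y) := by
  obtain ⟨f, g, hf, hg, hfc, hgc, hfg⟩ := hx
  obtain ⟨f', g', hf', hg', hfc', hgc', hfg'⟩ := hy
  refine ⟨f * g' + f' * g, g * g', ?_, mul_ne_zero hg hg', ?_, coeff_mul_nonneg hgc hgc', ?_⟩
  · exact nonneg_poly_ne_zero_add (mul_ne_zero hf hg') (coeff_mul_nonneg hfc hgc')
      (coeff_mul_nonneg hfc' hgc)
  · intro d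
    rw [MvPolynomial.coeff_add]
    exact add_nonneg (coeff_mul_nonneg hfc hgc' d) (coeff_mul_nonneg hfc' hgc d)
  · rw [RingHom.map_add, RingHom.map_mul, RingHom.map_mul, RingHom.map_mul]
    calc (x + y) * (algebraMap (RngP m n) (KKP m n) g * algebraMap (RngP m n) (KKP m n) g')
        = (x * algebraMap (RngP m n) (KKP m n) g) * algebraMap (RngP m n) (KKP m n) g'
          + (y * algebraMap (RngP m n) (KKP m n) g') * algebraMap (RngP m n) (KKP m n) g := by
          ring
      _ = _ := by rw [hfg, hfg']

private lemma div {x y : KKP m n} (hx : IsPos x) (hy : IsPos y) : IsPos (x / y) := by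
  obtain ⟨f, g, hf, hg, hfc, hgc, hfg⟩ := hx
  obtain ⟨f', g', hf', hg', hfc', hgc', hfg'⟩ := hy
  have hy0 : y ≠ 0 := ne_zero ⟨f', g', hf', hg', hfc', hgc', hfg'⟩
  refine ⟨f * g', g * f', mul_ne_zero hf hg', mul_ne_zero hg hf',
    coeff_mul_nonneg hfc hgc', coeff_mul_nonneg hgc hfc', ?_⟩
  rw [map_mul, map_mul]
  have h1 : algebraMap (RngP m n) (KKP m n) f' = y * algebraMap (RngP m n) (KKP m n) g' :=
    hfg'.symm
  field_simp
  calc x * algebraMap (RngP m n) (KKP m n) g * algebraMap (RngP m n) (KKP m n) f'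
      = (x * algebraMap (RngP m n) (KKP m n) g) * algebraMap (RngP m n) (KKP m n) f' := by ring
    _ = algebraMap (RngP m n) (KKP m n) f * (y * algebraMap (RngP m n) (KKP m n) g') := by
        rw [hfg, h1]
    _ = _ := by ring

private lemma prod {ι : Type*} (s : Finset ι) (f : ι → KKP m n)
    (h : ∀ i ∈ s, IsPos (f i)) : IsPos (∏ i ∈ s, f i) := by
  classical
  induction s using Finset.induction_on with
  | empty => simpa using one
  | insert a s hnotmem ih =>
    rw [Finset.prod_insert hnotmem]
    exact mul (h a (Finset.mem_insert_self a s)) (ih (fun i hi => h i (Finset.mem_insert_of_mem hi)))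

private lemma sum {ι : Type*} (s : Finset ι) (hs : s.Nonempty) (f : ι → KKP m n) :
    (∀ i ∈ s, IsPos (f i)) → IsPos (∑ i ∈ s, f i) := by
  classical
  induction hs using Finset.Nonempty.cons_induction with
  | singleton a => intro h; simpa using h a (by simp)
  | cons a s ha hs ih =>
    intro h
    rw [Finset.sum_cons]
    exact add (h a (by simp)) (ih (fun i hi => h i (by simp [hi])))

end IsPos

private lemma isPos_kappa [NeZero n] {p q : ZMod n → KKP m n}
    (hp : ∀ i, IsPos (p i)) (hq : ∀ i, IsPos (q i)) (i : ZMod n) :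
    IsPos (kappa n p q i) := by
  have hn1 : 1 ≤ n := Nat.one_le_iff_ne_zero.mpr (NeZero.ne n)
  rw [kappa]
  refine IsPos.sum _ ⟨0, by simp; omega⟩ _ (fun j _ => ?_)
  exact IsPos.mul (IsPos.prod _ _ (fun l _ => hp _)) (IsPos.prod _ _ (fun l _ => hq _))

private lemma isPos_Rp1 [NeZero n] {p q : ZMod n → KKP m n}
    (hp : ∀ i, IsPos (p i)) (hq : ∀ i, IsPos (q i)) (i : ZMod n) :
    IsPos ((Rp n p q).1 i) :=
  IsPos.div (IsPos.mul (hq i) (isPos_kappa hp hq (i+1))) (isPos_kappa hp hq i)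

private lemma isPos_Rp2 [NeZero n] {p q : ZMod n → KKP m n}
    (hp : ∀ i, IsPos (p i)) (hq : ∀ i, IsPos (q i)) (i : ZMod n) :
    IsPos ((Rp n p q).2 i) :=
  IsPos.div (IsPos.mul (hp i) (isPos_kappa hp hq i)) (isPos_kappa hp hq (i+1))

/-- distinctness of the row products at the generic point -/
private lemma prod_genQ_ne [NeZero n] (hn : 1 ≤ n) {j j' : Fin m} (hjj : j ≠ j') :
    ∏ x : ZMod n, genQ n m j x ≠ ∏ x : ZMod n, genQ n m j' x := by
  intro hcon
  simp only [genQ] at hcon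
  rw [← map_prod, ← map_prod] at hcon
  have hpoly := IsFractionRing.injective (RngP m n) (KKP m n) hcon
  have := congrArg (MvPolynomial.eval (fun v : Fin m × ZMod n => if v.1 = j then (2:ℚ) else 1))
    hpoly
  rw [map_prod, map_prod] at this
  simp only [MvPolynomial.eval_X, if_true,
    if_neg (show ¬ j' = j from fun hc => hjj hc.symm), Finset.prod_const, Finset.card_univ, ZMod.card,
    one_pow] at this
  have h2 : (1:ℚ) < 2^n := by
    calc (1:ℚ) < 2 := by norm_num
    _ ≤ 2^n := by
        nth_rewrite 1 [show (2:ℚ) = 2^1 by norm_num]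
        exact pow_le_pow_right₀ (by norm_num) hn
  rw [this] at h2
  norm_num at h2

end Positivity

/-- The geometric R-matrices satisfy the braid relation
`R_j R_{j+1} R_j = R_{j+1} R_j R_{j+1}`, the involutivity `R_j² = id`, and commute
for `|i-j| > 1`; hence they generate an `𝔖_m`-action on `ℚ(q₁,…,q_m)`. -/
theorem statement_18 (n m : ℕ) (hn : 2 ≤ n) :
    (∀ j : ℕ, j + 2 < m →
      Rgeom n m j (Rgeom n m (j + 1) (Rgeom n m j (genQ n m))) =
        Rgeom n m (j + 1) (Rgeom n m j (Rgeom n m (j + 1) (genQ n m)))) ∧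
    (∀ j : ℕ, j + 1 < m →
      Rgeom n m j (Rgeom n m j (genQ n m)) = genQ n m) ∧
    (∀ j j' : ℕ, j + 1 < j' → j' + 1 < m →
      Rgeom n m j (Rgeom n m j' (genQ n m)) =
        Rgeom n m j' (Rgeom n m j (genQ n m))) := by
  haveI : NeZero n := ⟨by omega⟩
  have hn1 : 1 ≤ n := by omega
  refine ⟨?_, ?_, ?_⟩
  · -- braid relation
    intro j hj2
    have hj1 : j + 1 < m := by omega
    have hj1b : j + 1 + 1 < m := by omega
    obtain ⟨p, hp⟩ : ∃ f, f = genQ n m ⟨j, Nat.lt_of_succ_lt hj1⟩ := ⟨_, rfl⟩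
    obtain ⟨q, hq⟩ : ∃ f, f = genQ n m ⟨j+1, hj1⟩ := ⟨_, rfl⟩
    obtain ⟨r, hr⟩ : ∃ f, f = genQ n m ⟨j+1+1, hj1b⟩ := ⟨_, rfl⟩
    have hpP : ∀ i, IsPos (p i) := by rw [hp]; intro i; simp only [genQ]; exact IsPos.X _
    have hqP : ∀ i, IsPos (q i) := by rw [hq]; intro i; simp only [genQ]; exact IsPos.X _
    have hrP : ∀ i, IsPos (r i) := by rw [hr]; intro i; simp only [genQ]; exact IsPos.X _
    have hABP1 : ∀ i, IsPos ((Rp n p q).1 i) := isPos_Rp1 hpP hqP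
    have hABP2 : ∀ i, IsPos ((Rp n p q).2 i) := isPos_Rp2 hpP hqP
    have hkpq : ∀ i, kappa n p q i ≠ 0 := fun i => (isPos_kappa hpP hqP i).ne_zero
    have hkBr : ∀ i, kappa n (Rp n p q).2 r i ≠ 0 :=
      fun i => (isPos_kappa hABP2 hrP i).ne_zero
    have hCD1 : ∀ i, IsPos ((Rp n (Rp n p q).2 r).1 i) := isPos_Rp1 hABP2 hrP
    have hCD2 : ∀ i, IsPos ((Rp n (Rp n p q).2 r).2 i) := isPos_Rp2 hABP2 hrP
    have hkAC : ∀ i, kappa n (Rp n p q).1 (Rp n (Rp n p q).2 r).1 i ≠ 0 :=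
      fun i => (isPos_kappa hABP1 hCD1 i).ne_zero
    have hkqr : ∀ i, kappa n q r i ≠ 0 := fun i => (isPos_kappa hqP hrP i).ne_zero
    have hGH1 : ∀ i, IsPos ((Rp n q r).1 i) := isPos_Rp1 hqP hrP
    have hGH2 : ∀ i, IsPos ((Rp n q r).2 i) := isPos_Rp2 hqP hrP
    have hkpG : ∀ i, kappa n p (Rp n q r).1 i ≠ 0 :=
      fun i => (isPos_kappa hpP hGH1 i).ne_zero
    have hIJ2 : ∀ i, IsPos ((Rp n p (Rp n q r).1).2 i) := isPos_Rp2 hpP hGH1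
    have hkJH : ∀ i, kappa n (Rp n p (Rp n q r).1).2 (Rp n q r).2 i ≠ 0 :=
      fun i => (isPos_kappa hIJ2 hGH2 i).ne_zero
    have hPQne : ∏ x : ZMod n, p x ≠ ∏ x : ZMod n, q x := by
      rw [hp, hq]; exact prod_genQ_ne hn1 (Fin.ne_of_val_ne (by show j ≠ j+1; omega))
    have hPRne : ∏ x : ZMod n, p x ≠ ∏ x : ZMod n, r x := by
      rw [hp, hr]; exact prod_genQ_ne hn1 (Fin.ne_of_val_ne (by show j ≠ j+1+1; omega))
    have hQRne : ∏ x : ZMod n, q x ≠ ∏ x : ZMod n, r x := by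
      rw [hq, hr]; exact prod_genQ_ne hn1 (Fin.ne_of_val_ne (by show j+1 ≠ j+1+1; omega))
    obtain ⟨T1, U1, V1⟩ := TUV_left p q r hkpq
    obtain ⟨T2, U2, V2⟩ := TUV_right (Rp n p q).1 (Rp n p q).2 r hkBr
    obtain ⟨T3, U3, V3⟩ :=
      TUV_left (Rp n p q).1 (Rp n (Rp n p q).2 r).1 (Rp n (Rp n p q).2 r).2 hkAC
    obtain ⟨T1', U1', V1'⟩ := TUV_right p q r hkqr
    obtain ⟨T2', U2', V2'⟩ := TUV_left p (Rp n q r).1 (Rp n q r).2 hkpG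
    obtain ⟨T3', U3', V3'⟩ :=
      TUV_right (Rp n p (Rp n q r).1).1 (Rp n p (Rp n q r).1).2 (Rp n q r).2 hkJH
    obtain ⟨hEI, hFK, hDL⟩ := triple_unique
      (Rp n (Rp n p q).1 (Rp n (Rp n p q).2 r).1).1
      (Rp n (Rp n p q).1 (Rp n (Rp n p q).2 r).1).2
      (Rp n (Rp n p q).2 r).2
      (Rp n p (Rp n q r).1).1
      (Rp n (Rp n p (Rp n q r).1).2 (Rp n q r).2).1
      (Rp n (Rp n p (Rp n q r).1).2 (Rp n q r).2).2
      (fun i => ((T3 i).trans ((T2 i).trans (T1 i))).trans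
        (((T3' i).trans ((T2' i).trans (T1' i))).symm))
      (fun i => ((U3 i).trans ((U2 i).trans (U1 i))).trans
        (((U3' i).trans ((U2' i).trans (U1' i))).symm))
      (fun i => ((V3 i).trans ((V2 i).trans (V1 i))).trans
        (((V3' i).trans ((V2' i).trans (V1' i))).symm))
      (by rw [Rp_prod_fst _ _ hkAC, Rp_prod_fst _ _ hkBr, Rp_prod_fst _ _ hkpG,
          Rp_prod_fst _ _ hkqr])
      (by rw [Rp_prod_snd _ _ hkAC, Rp_prod_fst _ _ hkpq, Rp_prod_fst _ _ hkJH,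
          Rp_prod_snd _ _ hkqr])
      (by rw [Rp_prod_fst _ _ hkAC, Rp_prod_fst _ _ hkBr, Rp_prod_snd _ _ hkBr,
          Rp_prod_snd _ _ hkpq]; exact fun hc => hPRne hc.symm)
      (by rw [Rp_prod_snd _ _ hkAC, Rp_prod_fst _ _ hkpq, Rp_prod_snd _ _ hkBr,
          Rp_prod_snd _ _ hkpq]; exact fun hc => hPQne hc.symm)
      (by rw [Rp_prod_fst _ _ hkAC, Rp_prod_fst _ _ hkBr, Rp_prod_snd _ _ hkAC,
          Rp_prod_fst _ _ hkpq]; exact fun hc => hQRne hc.symm)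
      (fun i => (hCD2 i).ne_zero)
    obtain ⟨R1, hR1⟩ : ∃ f, f = Rgeom n m j (genQ n m) := ⟨_, rfl⟩
    obtain ⟨R2, hR2⟩ : ∃ f, f = Rgeom n m (j+1) R1 := ⟨_, rfl⟩
    obtain ⟨S1, hS1⟩ : ∃ f, f = Rgeom n m (j+1) (genQ n m) := ⟨_, rfl⟩
    obtain ⟨S2, hS2⟩ : ∃ f, f = Rgeom n m j S1 := ⟨_, rfl⟩
    have r10 : R1 ⟨j, Nat.lt_of_succ_lt hj1⟩ = (Rp n p q).1 := by
      rw [hR1, Rgeom_left j hj1 _ _ rfl, ← hp, ← hq]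
    have r11 : R1 ⟨j+1, hj1⟩ = (Rp n p q).2 := by
      rw [hR1, Rgeom_right j hj1 _ _ rfl, ← hp, ← hq]
    have r12 : R1 ⟨j+1+1, hj1b⟩ = r := by
      rw [hR1, Rgeom_other j _ _ (by show j+1+1 ≠ j; omega) (by show j+1+1 ≠ j+1; omega), ← hr]
    have r20 : R2 ⟨j, Nat.lt_of_succ_lt hj1⟩ = (Rp n p q).1 := by
      rw [hR2, Rgeom_other (j+1) _ _ (by show j ≠ j+1; omega) (by show j ≠ j+1+1; omega), r10]
    have r21 : R2 ⟨j+1, hj1⟩ = (Rp n (Rp n p q).2 r).1 := by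
      rw [hR2, Rgeom_left (j+1) hj1b _ _ rfl, r11, r12]
    have r22 : R2 ⟨j+1+1, hj1b⟩ = (Rp n (Rp n p q).2 r).2 := by
      rw [hR2, Rgeom_right (j+1) hj1b _ _ rfl, r11, r12]
    have s10 : S1 ⟨j, Nat.lt_of_succ_lt hj1⟩ = p := by
      rw [hS1, Rgeom_other (j+1) _ _ (by show j ≠ j+1; omega) (by show j ≠ j+1+1; omega), ← hp]
    have s11 : S1 ⟨j+1, hj1⟩ = (Rp n q r).1 := by
      rw [hS1, Rgeom_left (j+1) hj1b _ _ rfl, ← hq, ← hr]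
    have s12 : S1 ⟨j+1+1, hj1b⟩ = (Rp n q r).2 := by
      rw [hS1, Rgeom_right (j+1) hj1b _ _ rfl, ← hq, ← hr]
    have s20 : S2 ⟨j, Nat.lt_of_succ_lt hj1⟩ = (Rp n p (Rp n q r).1).1 := by
      rw [hS2, Rgeom_left j hj1 _ _ rfl, s10, s11]
    have s21 : S2 ⟨j+1, hj1⟩ = (Rp n p (Rp n q r).1).2 := by
      rw [hS2, Rgeom_right j hj1 _ _ rfl, s10, s11]
    have s22 : S2 ⟨j+1+1, hj1b⟩ = (Rp n q r).2 := by
      rw [hS2, Rgeom_other j _ _ (by show j+1+1 ≠ j; omega) (by show j+1+1 ≠ j+1; omega), s12]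
    funext h i
    rw [← hR1, ← hR2, ← hS1, ← hS2]
    by_cases hc0 : (h:ℕ) = j
    · have hh : h = ⟨j, Nat.lt_of_succ_lt hj1⟩ := Fin.ext hc0
      rw [hh, Rgeom_left j hj1 _ _ rfl, r20, r21,
        Rgeom_other (j+1) _ _ (by show j ≠ j+1; omega) (by show j ≠ j+1+1; omega), s20]
      exact congrFun hEI i
    · by_cases hc1 : (h:ℕ) = j+1
      · have hh : h = ⟨j+1, hj1⟩ := Fin.ext hc1
        rw [hh, Rgeom_right j hj1 _ _ rfl, r20, r21,
          Rgeom_left (j+1) hj1b _ _ rfl, s21, s22]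
        exact congrFun hFK i
      · by_cases hc2 : (h:ℕ) = j+1+1
        · have hh : h = ⟨j+1+1, hj1b⟩ := Fin.ext hc2
          rw [hh, Rgeom_other j _ _ (by show j+1+1 ≠ j; omega) (by show j+1+1 ≠ j+1; omega),
            r22, Rgeom_right (j+1) hj1b _ _ rfl, s21, s22]
          exact congrFun hDL i
        · rw [Rgeom_other j _ h hc0 hc1, hR2, Rgeom_other (j+1) _ h hc1 hc2, hR1,
            Rgeom_other j _ h hc0 hc1, Rgeom_other (j+1) _ h hc1 hc2, hS2,
            Rgeom_other j _ h hc0 hc1, hS1, Rgeom_other (j+1) _ h hc1 hc2]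
  · -- involution
    intro j hj
    obtain ⟨p, hp⟩ : ∃ f, f = genQ n m ⟨j, Nat.lt_of_succ_lt hj⟩ := ⟨_, rfl⟩
    obtain ⟨q, hq⟩ : ∃ f, f = genQ n m ⟨j+1, hj⟩ := ⟨_, rfl⟩
    have hpP : ∀ i, IsPos (p i) := by rw [hp]; intro i; simp only [genQ]; exact IsPos.X _
    have hqP : ∀ i, IsPos (q i) := by rw [hq]; intro i; simp only [genQ]; exact IsPos.X _
    have hkpq : ∀ i, kappa n p q i ≠ 0 := fun i => (isPos_kappa hpP hqP i).ne_zero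
    have hPQne : ∏ x : ZMod n, p x ≠ ∏ x : ZMod n, q x := by
      rw [hp, hq]; exact prod_genQ_ne hn1 (Fin.ne_of_val_ne (by show j ≠ j+1; omega))
    obtain ⟨R1, hR1⟩ : ∃ f, f = Rgeom n m j (genQ n m) := ⟨_, rfl⟩
    have r10 : R1 ⟨j, Nat.lt_of_succ_lt hj⟩ = (Rp n p q).1 := by
      rw [hR1, Rgeom_left j hj _ _ rfl, ← hp, ← hq]
    have r11 : R1 ⟨j+1, hj⟩ = (Rp n p q).2 := by
      rw [hR1, Rgeom_right j hj _ _ rfl, ← hp, ← hq]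
    have hinv := Rp_invol p q hkpq hPQne
    funext h i
    rw [← hR1]
    by_cases hc0 : (h:ℕ) = j
    · have hh : h = ⟨j, Nat.lt_of_succ_lt hj⟩ := Fin.ext hc0
      rw [hh, Rgeom_left j hj _ _ rfl, r10, r11, hinv]
      show p i = genQ n m ⟨j, Nat.lt_of_succ_lt hj⟩ i
      rw [hp]
    · by_cases hc1 : (h:ℕ) = j+1
      · have hh : h = ⟨j+1, hj⟩ := Fin.ext hc1
        rw [hh, Rgeom_right j hj _ _ rfl, r10, r11, hinv]
        show q i = genQ n m ⟨j+1, hj⟩ i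
        rw [hq]
      · rw [Rgeom_other j _ h hc0 hc1, hR1, Rgeom_other j _ h hc0 hc1]
  · -- commutation
    intro j j' hjj hj'
    have hj1 : j + 1 < m := by omega
    funext h i
    by_cases hc0 : (h:ℕ) = j
    · rw [Rgeom_left j hj1 _ h hc0,
        Rgeom_other j' _ _ (by show j ≠ j'; omega) (by show j ≠ j'+1; omega),
        Rgeom_other j' _ _ (by show j+1 ≠ j'; omega) (by show j+1 ≠ j'+1; omega),
        Rgeom_other j' _ h (by omega) (by omega), Rgeom_left j hj1 _ h hc0]
    · by_cases hc1 : (h:ℕ) = j+1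
      · rw [Rgeom_right j hj1 _ h hc1,
          Rgeom_other j' _ _ (by show j ≠ j'; omega) (by show j ≠ j'+1; omega),
          Rgeom_other j' _ _ (by show j+1 ≠ j'; omega) (by show j+1 ≠ j'+1; omega),
          Rgeom_other j' _ h (by omega) (by omega), Rgeom_right j hj1 _ h hc1]
      · by_cases hc2 : (h:ℕ) = j'
        · rw [Rgeom_other j _ h hc0 hc1, Rgeom_left j' hj' _ h hc2,
            Rgeom_left j' hj' _ h hc2,
            Rgeom_other j _ _ (by show j' ≠ j; omega) (by show j' ≠ j+1; omega),
            Rgeom_other j _ _ (by show j'+1 ≠ j; omega) (by show j'+1 ≠ j+1; omega)]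
        · by_cases hc3 : (h:ℕ) = j'+1
          · rw [Rgeom_other j _ h hc0 hc1, Rgeom_right j' hj' _ h hc3,
              Rgeom_right j' hj' _ h hc3,
              Rgeom_other j _ _ (by show j' ≠ j; omega) (by show j' ≠ j+1; omega),
              Rgeom_other j _ _ (by show j'+1 ≠ j; omega) (by show j'+1 ≠ j+1; omega)]
          · rw [Rgeom_other j _ h hc0 hc1, Rgeom_other j' _ h hc2 hc3,
              Rgeom_other j' _ h hc2 hc3, Rgeom_other j _ h hc0 hc1]
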